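/- The relation x ≥ y on the symmetrized tropical semiring 𝕊, defined by x > y or x = y, is a partial order: it is reflexive, antisymmetric, and transitive. -/

import Mathlib

/-!  Signed tropical numbers 𝕋±, the symmetrized tropical semiring 𝕊,
     and signed tropical convexity (Loho–Végh). -/

inductive SSign : Type where
  | pos : SSign
  | neg : SSign
  | bal : SSign
deriving DecidableEq

/-- The symmetrized tropical semiring 𝕊: the tropical zero 𝟘 = -∞ together with
elements `elem s r` where `s` is a sign (⊕, ⊖ or •) and `r` a real number. -/
inductive STrop : Type where
  | zero : STrop
  | elem : SSign → ℝ → STrop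

namespace STrop

/-- membership in the signed tropical numbers 𝕋± (i.e. not balanced-nonzero). -/
def isSigned : STrop → Prop
  | elem SSign.bal _ => False
  | _ => True

/-- membership in 𝕋≥, the nonnegative tropical numbers. -/
def nneg : STrop → Prop
  | zero => True
  | elem SSign.pos _ => True
  | _ => False

/-- membership in 𝕋≤, the nonpositive tropical numbers. -/
def npos : STrop → Prop
  | zero => True
  | elem SSign.neg _ => True
  | _ => False

/-- strictly positive signed element (sign ⊕, not 𝟘). -/
def isPos : STrop → Prop
  | elem SSign.pos _ => True
  | _ => False

/-- balanced or 𝟘 (membership in 𝕋•). -/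
def balZero : STrop → Prop
  | zero => True
  | elem SSign.bal _ => True
  | _ => False

/-- the negation map ⊖. -/
def neg : STrop → STrop
  | zero => zero
  | elem SSign.pos r => elem SSign.neg r
  | elem SSign.neg r => elem SSign.pos r
  | elem SSign.bal r => elem SSign.bal r

/-- tropical addition ⊕ on 𝕊. -/
noncomputable def add : STrop → STrop → STrop
  | zero, y => y
  | x, zero => x
  | elem s r, elem t u =>
    if r < u then elem t u
    else if u < r then elem s r
    else if s = t then elem s r
    else elem SSign.bal r

def signMul : SSign → SSign → SSign
  | SSign.pos, t => t
  | SSign.neg, SSign.pos => SSign.neg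
  | SSign.neg, SSign.neg => SSign.pos
  | SSign.neg, SSign.bal => SSign.bal
  | SSign.bal, _ => SSign.bal

/-- tropical multiplication ⊙ on 𝕊. -/
def mul : STrop → STrop → STrop
  | zero, _ => zero
  | _, zero => zero
  | elem s r, elem t u => elem (signMul s t) (r + u)

/-- a ⊖ b := a ⊕ (⊖b). -/
noncomputable def sub (x y : STrop) : STrop := add x (neg y)

/-- the tropical one, the signed element ⊕0. -/
def one : STrop := elem SSign.pos 0

/-- the absolute value |·| : 𝕊 → 𝕋≥. -/
def absS : STrop → STrop
  | zero => zero
  | elem _ r => elem SSign.pos r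

/-- strict order: x > y iff x ⊖ y is a strictly positive signed element. -/
def sgt (x y : STrop) : Prop := isPos (sub x y)

/-- balance relation: x ⋈ y iff x ⊖ y is balanced or 𝟘. -/
def bal (x y : STrop) : Prop := balZero (sub x y)

/-- the relation ⊵ : x ⊵ y iff x > y or x ⋈ y. -/
def teq (x y : STrop) : Prop := sgt x y ∨ bal x y

/-- the total order ≤ on the signed tropical numbers 𝕋±
(arbitrarily `False` whenever a balanced element is involved). -/
def sle : STrop → STrop → Prop
  | zero, zero => True
  | zero, elem SSign.pos _ => True
  | elem SSign.neg _, zero => True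
  | elem SSign.neg _, elem SSign.pos _ => True
  | elem SSign.pos r, elem SSign.pos u => r ≤ u
  | elem SSign.neg r, elem SSign.neg u => u ≤ r
  | _, _ => False

/-- U(a): the set of signed numbers incomparable with a; the singleton {a}
for signed a, and the order interval [⊖|a|, |a|] for balanced a. -/
def U : STrop → Set STrop
  | elem SSign.bal r => {x | isSigned x ∧ sle (elem SSign.neg r) x ∧ sle x (elem SSign.pos r)}
  | a => {a}

/-- tropical sum of finitely many elements of 𝕊. -/
noncomputable def sumFin : ∀ {n : ℕ}, (Fin n → STrop) → STrop
  | 0, _ => zero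
  | _ + 1, f => add (f 0) (sumFin fun i => f i.succ)

/-- matrix–vector product A ⊙ x over 𝕊. -/
noncomputable def mv {d n : ℕ} (A : Fin d → Fin n → STrop) (x : Fin n → STrop) : Fin d → STrop :=
  fun i => sumFin fun j => mul (A i j) (x j)

/-- vectors in 𝕋±^d. -/
def isSignedVec {d : ℕ} (v : Fin d → STrop) : Prop := ∀ i, isSigned (v i)

/-- the signed tropical convex hull of the columns of a matrix A:
tconv(A) = {z ∈ 𝕋±^d : z ⋈ A⊙x for some x ∈ 𝕋≥^n with ⊕_j x_j = 0}. -/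
def tconv {d n : ℕ} (A : Fin d → Fin n → STrop) : Set (Fin d → STrop) :=
  {z | isSignedVec z ∧ ∃ x : Fin n → STrop,
    (∀ j, nneg (x j)) ∧ sumFin x = one ∧ ∀ i, bal (z i) (mv A x i)}

/-- the signed tropical convex hull of an arbitrary set: the union of the hulls
of all finite collections of points of M. -/
def tconvSet {d : ℕ} (M : Set (Fin d → STrop)) : Set (Fin d → STrop) :=
  ⋃ (n : ℕ) (A : Fin d → Fin n → STrop) (_ : ∀ j, (fun i => A i j) ∈ M), tconv A

/-- a set M ⊆ 𝕋±^d is tropically convex iff M = tconv(M). -/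
def TropConvex {d : ℕ} (M : Set (Fin d → STrop)) : Prop := M = tconvSet M

/-- evaluation a ⊙ (0, x₁, …, x_d)ᵀ of an affine functional. -/
noncomputable def affEval {d : ℕ} (a : Fin (d + 1) → STrop) (x : Fin d → STrop) : STrop :=
  sumFin fun j => mul (a j) ((Fin.cons one x : Fin (d + 1) → STrop) j)

/-- the open signed tropical halfspace H⁺(a) = {x ∈ 𝕋±^d : a⊙(0,x)ᵀ > 𝟘}. -/
def Hopen {d : ℕ} (a : Fin (d + 1) → STrop) : Set (Fin d → STrop) :=
  {x | isSignedVec x ∧ sgt (affEval a x) zero}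

/-- the closed signed tropical halfspace H̄⁺(a) = {x ∈ 𝕋±^d : a⊙(0,x)ᵀ ⊵ 𝟘}. -/
def Hclosed {d : ℕ} (a : Fin (d + 1) → STrop) : Set (Fin d → STrop) :=
  {x | isSignedVec x ∧ teq (affEval a x) zero}

/-- the non-negative kernel nnker(A). -/
def nnker {d n : ℕ} (A : Fin d → Fin n → STrop) : Set (Fin n → STrop) :=
  {x | (∀ j, nneg (x j)) ∧ x ≠ (fun _ => zero) ∧ ∀ i, balZero (mv A x i)}

/-- the open tropical cone sep(A) = {y ∈ 𝕋±^d : yᵀ⊙A > 𝟘 componentwise}. -/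
def sep {d : ℕ} {J : Type} (A : Fin d → J → STrop) : Set (Fin d → STrop) :=
  {y | isSignedVec y ∧ ∀ j, isPos (sumFin fun i => mul (y i) (A i j))}

end STrop

/-- the non-strict relation x ≥ y on 𝕊: x > y or x = y. -/
def STrop.sge (x y : STrop) : Prop := STrop.sgt x y ∨ x = y


/-! Write each element of 𝕊 as a pair of a positive and a negative part in `WithBot ℝ`
(⊕r ↦ (r, ⊥), ⊖r ↦ (⊥, r), •r ↦ (r, r), 𝟘 ↦ (⊥, ⊥)), as in the construction of 𝕊 by
symmetrization. An element is positive iff its negative part is below its positive part, and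
the sign of `x ⊕ y` is decided by the componentwise maxima of the parts. Hence `x > y` reads
`max x⁻ y⁺ < max x⁺ y⁻`, and transitivity becomes an elementary fact about maxima in a linear
order. -/

lemma max_lt_max_trans {α : Type*} [LinearOrder α] {a b c d e f : α}
    (h₁ : max b c < max a d) (h₂ : max d e < max c f) : max b e < max a f := by
  grind

namespace STrop

def posPart : STrop → WithBot ℝ
  | elem SSign.pos r => r
  | elem SSign.bal r => r
  | _ => ⊥

def negPart : STrop → WithBot ℝ
  | elem SSign.neg r => r
  | elem SSign.bal r => r
  | _ => ⊥

@[simp] lemma posPart_neg (x : STrop) : posPart (neg x) = negPart x := by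
  rcases x with _ | ⟨_ | _ | _, r⟩ <;> rfl

@[simp] lemma negPart_neg (x : STrop) : negPart (neg x) = posPart x := by
  rcases x with _ | ⟨_ | _ | _, r⟩ <;> rfl

lemma isPos_add_iff (x y : STrop) :
    isPos (add x y) ↔ max (negPart x) (negPart y) < max (posPart x) (posPart y) := by
  rcases x with _ | ⟨_ | _ | _, r⟩ <;> rcases y with _ | ⟨_ | _ | _, u⟩ <;>
    simp only [add, isPos, posPart, negPart] <;> (try split_ifs) <;> simp_all <;> linarith

lemma sgt_iff (x y : STrop) :
    sgt x y ↔ max (negPart x) (posPart y) < max (posPart x) (negPart y) := by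
  rw [sgt, sub, isPos_add_iff, posPart_neg, negPart_neg]

lemma sgt_trans {x y z : STrop} (hxy : sgt x y) (hyz : sgt y z) : sgt x z := by
  rw [sgt_iff] at *
  exact max_lt_max_trans hxy hyz

lemma sgt_asymm {x y : STrop} (hxy : sgt x y) : ¬ sgt y x := by
  rw [sgt_iff] at *
  rw [max_comm (negPart y), max_comm (posPart y)]
  exact hxy.not_gt

end STrop

/-- the relation ≥ on 𝕊 is a partial order. -/
theorem sge_partial_order :
    (∀ x : STrop, STrop.sge x x) ∧
    (∀ x y : STrop, STrop.sge x y → STrop.sge y x → x = y) ∧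
    (∀ x y z : STrop, STrop.sge x y → STrop.sge y z → STrop.sge x z) := by
  refine ⟨fun x => Or.inr rfl, ?_, ?_⟩
  · rintro x y (hxy | rfl) (hyx | hyx)
    · exact absurd hyx (STrop.sgt_asymm hxy)
    · exact hyx.symm
    all_goals rfl
  · rintro x y z (hxy | rfl) hyz
    · rcases hyz with hyz | rfl
      · exact Or.inl (STrop.sgt_trans hxy hyz)
      · exact Or.inl hxy
    · exact hyz
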